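/- For every α ∈ (0,1) and A > 0 there exist a real number β with 0 < β ≤ α/16 and a constant R₁ = R₁(α,A) > 0 such that for every integer N ≥ 1, every u ∈ [−2+α, 2−α], every t₁, t₂ ∈ [−A,A], and every H ∈ ℝ: if |Im( (u+t_i/N)·d(H) )| ≤ β holds for both i = 1 and i = 2, then | N^{−1}·K̃_N( (u+t₁/N)·d(H), (u+t₂/N)·d(H), 1/N ) | ≤ R₁^{2N}. -/

import Mathlib

open Real

noncomputable section

/-- The monic (probabilists') Hermite polynomial, evaluated at a complex number. -/
def hermiteH (k : ℕ) (z : ℂ) : ℂ := Polynomial.aeval z (Polynomial.hermite k)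

/-- The normalized Hermite polynomial `p_k = H_k / ((2π)^{1/4} (k!)^{1/2})`. -/
def hermiteP (k : ℕ) (z : ℂ) : ℂ :=
  hermiteH k z / (((2 * π) ^ ((1:ℝ)/4) * Real.sqrt (Nat.factorial k) : ℝ) : ℂ)

/-- The Hermite function `φ_k(z) = p_k(z) exp(−z²/4)`. -/
def hermitePhi (k : ℕ) (z : ℂ) : ℂ := hermiteP k z * Complex.exp (-(z ^ 2) / 4)

/-- The Hermite reproducing kernel `K_N(z₁,z₂) = Σ_{k<N} φ_k(z₁) φ_k(z₂)`. -/
def kernelK (N : ℕ) (z₁ z₂ : ℂ) : ℂ :=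
  ∑ k ∈ Finset.range N, hermitePhi k z₁ * hermitePhi k z₂

/-- The rescaled kernel `K̃_N(z₁,z₂,s) = s^{−1/2} K_N(z₁ s^{−1/2}, z₂ s^{−1/2})`
(principal powers). -/
def kernelKt (N : ℕ) (z₁ z₂ s : ℂ) : ℂ :=
  s ^ (-(1:ℂ)/2) * kernelK N (z₁ * s ^ (-(1:ℂ)/2)) (z₂ * s ^ (-(1:ℂ)/2))

/-- `d(H) = √(1+iH)`, the principal square root. -/
def dC (H : ℝ) : ℂ := (1 + H * Complex.I) ^ ((1:ℂ)/2)

/-- The closed strip `S̄_{α,β} = {z : |Re z| ≤ 2−α, |Im z| ≤ β}`. -/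
def Sbar (α β : ℝ) : Set ℂ := {z : ℂ | |z.re| ≤ 2 - α ∧ |z.im| ≤ β}

/-- The Wigner semicircle density. -/
def wigner (x : ℝ) : ℝ := (2 * π)⁻¹ * Real.sqrt (4 - x ^ 2)

/-- The analytic continuation of the Wigner density,
`w(z) = (2π)⁻¹ (2−z)^{1/2} (2+z)^{1/2}` (principal powers). -/
def wignerC (z : ℂ) : ℂ :=
  (((2 * π)⁻¹ : ℝ) : ℂ) * ((2 - z) ^ ((1:ℂ)/2) * (2 + z) ^ ((1:ℂ)/2))

-- t^k ≤ k! * exp t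
lemma pow_le_fact_exp {t : ℝ} (ht : 0 ≤ t) (k : ℕ) : t ^ k ≤ (Nat.factorial k) * Real.exp t := by
  have h := Real.pow_div_factorial_le_exp t ht k
  have hk : (0:ℝ) < (Nat.factorial k : ℝ) := by positivity
  rw [div_le_iff₀ hk] at h
  linarith [h]

lemma le_of_sq_le_sq'' {a b : ℝ} (ha : 0 ≤ a) (hb : 0 ≤ b) (h : a ^ 2 ≤ b ^ 2) : a ≤ b := by
  by_contra hab
  push_neg at hab
  nlinarith

-- r^k ≤ (√2)^k √(k!) e^{r²/4}
lemma pow_le_sqrt_fact {r : ℝ} (hr : 0 ≤ r) (k : ℕ) :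
    r ^ k ≤ Real.sqrt 2 ^ k * Real.sqrt (Nat.factorial k) * Real.exp (r ^ 2 / 4) := by
  have h2 : (0:ℝ) ≤ 2 := by norm_num
  have hfk : (0:ℝ) ≤ (Nat.factorial k : ℝ) := by positivity
  refine le_of_sq_le_sq'' (by positivity) (by positivity) ?_
  have key : (r ^ 2 / 2) ^ k ≤ (Nat.factorial k : ℝ) * Real.exp (r ^ 2 / 2) :=
    pow_le_fact_exp (by positivity) k
  have e1 : (Real.sqrt 2 ^ k) ^ 2 = 2 ^ k := by
    rw [← pow_mul, mul_comm k 2, pow_mul, Real.sq_sqrt h2]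
  have e2 : Real.sqrt (Nat.factorial k) ^ 2 = (Nat.factorial k : ℝ) := Real.sq_sqrt hfk
  have e3 : Real.exp (r ^ 2 / 4) ^ 2 = Real.exp (r ^ 2 / 2) := by
    rw [sq, ← Real.exp_add]; ring_nf
  calc (r ^ k) ^ 2 = (2:ℝ) ^ k * (r ^ 2 / 2) ^ k := by
        rw [← mul_pow, ← pow_mul, mul_comm k 2, pow_mul]; ring_nf
    _ ≤ 2 ^ k * ((Nat.factorial k : ℝ) * Real.exp (r ^ 2 / 2)) := by
        apply mul_le_mul_of_nonneg_left key (by positivity)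
    _ = (Real.sqrt 2 ^ k * Real.sqrt (Nat.factorial k) * Real.exp (r ^ 2 / 4)) ^ 2 := by
        rw [mul_pow, mul_pow, e1, e2, e3]; ring

-- (k+j)! ≤ k! * (k+j)^j
lemma fact_add_le (k : ℕ) : ∀ j : ℕ, Nat.factorial (k + j) ≤ Nat.factorial k * (k + j) ^ j := by
  intro j
  induction j with
  | zero => simp
  | succ j ih =>
    have h1 : Nat.factorial (k + (j+1)) = (k + j + 1) * Nat.factorial (k + j) := by
      rw [← Nat.add_assoc]; exact Nat.factorial_succ _
    calc Nat.factorial (k + (j+1)) = (k + j + 1) * Nat.factorial (k + j) := h1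
      _ ≤ (k + j + 1) * (Nat.factorial k * (k + j) ^ j) := Nat.mul_le_mul_left _ ih
      _ ≤ (k + j + 1) * (Nat.factorial k * (k + j + 1) ^ j) := by
          exact Nat.mul_le_mul_left _ (Nat.mul_le_mul_left _ (Nat.pow_le_pow_left (Nat.le_succ _) j))
      _ = Nat.factorial k * (k + (j+1)) ^ (j+1) := by ring_nf
-- key coefficient bound: D √(k!) ≤ √(n!) e^{n/2}  where D = (2m-1)‼ C(n,k), n = 2m+k
lemma key_coeff_bound (m k : ℕ) :
    ((Nat.doubleFactorial (2 * m - 1) * Nat.choose (2 * m + k) k : ℕ) : ℝ) *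
      Real.sqrt (Nat.factorial k) ≤
    Real.sqrt (Nat.factorial (2 * m + k)) * Real.exp ((2 * m + k : ℕ) / 2) := by
  set n := 2 * m + k with hn
  have hFk : (0:ℝ) < (Nat.factorial k : ℝ) := by positivity
  have hFn : (0:ℝ) < (Nat.factorial n : ℝ) := by positivity
  have hFm : (0:ℝ) < (Nat.factorial m : ℝ) := by positivity
  -- identities
  have idA : ((Nat.choose n k : ℝ)) * (Nat.factorial k) * (Nat.factorial (2 * m)) =
      (Nat.factorial n) := by
    have h := Nat.choose_mul_factorial_mul_factorial (show k ≤ n by omega)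
    have h2 : n - k = 2 * m := by omega
    rw [h2] at h
    exact_mod_cast congrArg (fun x : ℕ => (x : ℝ)) h
  have idB : ((Nat.doubleFactorial (2 * m - 1) : ℝ)) * (2 ^ m * (Nat.factorial m)) =
      (Nat.factorial (2 * m)) := by
    rcases Nat.eq_zero_or_pos m with hm | hm
    · subst hm; simp [Nat.doubleFactorial]
    · obtain ⟨m', rfl⟩ : ∃ m', m = m' + 1 := ⟨m - 1, by omega⟩
      have h1 : (2 * (m' + 1)) = (2 * m' + 1) + 1 := by ring
      have h2 := Nat.factorial_eq_mul_doubleFactorial (2 * m' + 1)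
      rw [← h1] at h2
      have h3 := Nat.doubleFactorial_two_mul (m' + 1)
      have : Nat.factorial (2 * (m' + 1)) =
          (2 ^ (m' + 1) * Nat.factorial (m' + 1)) * Nat.doubleFactorial (2 * (m' + 1) - 1) := by
        rw [h2, h3]; congr 1
      rw [this]
      push_cast
      ring
  -- nat fact: n! ≤ k! * n^{2m}
  have natFact : ((Nat.factorial n : ℝ)) ≤ (Nat.factorial k) * (n : ℝ) ^ (2 * m) := by
    have h := fact_add_le k (2 * m)
    have h2 : k + 2 * m = n := by omega
    rw [h2] at h
    exact_mod_cast h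
  -- exp fact: (n/2)^m ≤ m! e^{n/2}
  have expFact : ((n : ℝ) / 2) ^ m ≤ (Nat.factorial m) * Real.exp ((n:ℝ) / 2) :=
    pow_le_fact_exp (by positivity) m
  -- squared inequality
  set D : ℝ := ((Nat.doubleFactorial (2 * m - 1) * Nat.choose n k : ℕ) : ℝ) with hD
  have hD0 : 0 ≤ D := by positivity
  have hDC : D = (Nat.doubleFactorial (2 * m - 1) : ℝ) * (Nat.choose n k : ℝ) := by
    rw [hD]; push_cast; ring
  have hP : (0:ℝ) < 2 ^ m * (Nat.factorial m : ℝ) := by positivity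
  have hProd : D * ((2:ℝ) ^ m * (Nat.factorial m)) * (Nat.factorial k) = (Nat.factorial n) := by
    rw [hDC]
    calc (Nat.doubleFactorial (2 * m - 1) : ℝ) * (Nat.choose n k : ℝ) *
          ((2:ℝ) ^ m * (Nat.factorial m)) * (Nat.factorial k)
        = ((Nat.doubleFactorial (2 * m - 1) : ℝ) * (2 ^ m * (Nat.factorial m))) *
            ((Nat.choose n k : ℝ) * (Nat.factorial k)) := by ring
      _ = (Nat.factorial (2 * m)) * ((Nat.choose n k : ℝ) * (Nat.factorial k)) := by rw [idB]
      _ = (Nat.choose n k : ℝ) * (Nat.factorial k) * (Nat.factorial (2 * m)) := by ring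
      _ = (Nat.factorial n) := idA
  have hpow2 : ((n:ℝ)) ^ (2 * m) = 4 ^ m * (((n:ℝ)/2) ^ m) ^ 2 := by
    have h1 : (((n:ℝ)/2) ^ m) ^ 2 = ((n:ℝ)/2) ^ (2*m) := by rw [← pow_mul, mul_comm]
    have h4 : (4:ℝ) ^ m = (2:ℝ) ^ (2*m) := by rw [pow_mul]; norm_num
    rw [h1, div_pow, h4]
    field_simp
  have hexp2 : Real.exp ((n:ℝ)) = Real.exp ((n:ℝ)/2) ^ 2 := by
    rw [sq, ← Real.exp_add]; ring_nf
  set Fk : ℝ := (Nat.factorial k : ℝ)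
  set Fn : ℝ := (Nat.factorial n : ℝ)
  set Fm : ℝ := (Nat.factorial m : ℝ)
  set E : ℝ := Real.exp ((n:ℝ)) with hE
  set P : ℝ := (2:ℝ) ^ m * Fm with hPdef
  have hE0 : 0 < E := Real.exp_pos _
  have hPsq : P ^ 2 = 4 ^ m * Fm ^ 2 := by
    rw [hPdef, mul_pow]
    congr 1
    rw [← pow_mul, mul_comm m 2, pow_mul]
    norm_num
  have hsq : D ^ 2 * Fk ≤ Fn * E := by
    have step : Fn ≤ Fk * (4 ^ m * (Fm ^ 2 * E)) := by
      calc Fn ≤ Fk * (n : ℝ) ^ (2 * m) := natFact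
        _ = Fk * (4 ^ m * (((n:ℝ)/2) ^ m) ^ 2) := by rw [hpow2]
        _ ≤ Fk * (4 ^ m * (Fm * Real.exp ((n:ℝ)/2)) ^ 2) := by
            have h0 : (0:ℝ) ≤ ((n:ℝ)/2) ^ m := by positivity
            have := pow_le_pow_left₀ h0 expFact 2
            gcongr
        _ = Fk * (4 ^ m * (Fm ^ 2 * E)) := by
            have e : Real.exp ((n:ℝ)/2) * Real.exp ((n:ℝ)/2) = Real.exp ((n:ℝ)) := by
              rw [← Real.exp_add]; ring_nf
            rw [hE, mul_pow, sq (Real.exp ((n:ℝ)/2)), e]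
    have h1 : D ^ 2 * Fk * (P ^ 2 * Fk) = Fn ^ 2 := by
      have h := hProd
      nlinarith [h]
    have h2 : Fn ^ 2 ≤ (Fn * E) * (P ^ 2 * Fk) := by
      have := mul_le_mul_of_nonneg_left step hFn.le
      calc Fn ^ 2 = Fn * Fn := sq Fn
        _ ≤ Fn * (Fk * (4 ^ m * (Fm ^ 2 * E))) := this
        _ = (Fn * E) * (P ^ 2 * Fk) := by rw [hPsq]; ring
    have h3 : D ^ 2 * Fk * (P ^ 2 * Fk) ≤ (Fn * E) * (P ^ 2 * Fk) := by rw [h1]; exact h2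
    exact le_of_mul_le_mul_right h3 (by positivity)
  -- unsquare
  have goal2 : (D * Real.sqrt (Nat.factorial k)) ^ 2 ≤
      (Real.sqrt (Nat.factorial n) * Real.exp ((n:ℝ)/2)) ^ 2 := by
    rw [mul_pow, mul_pow, Real.sq_sqrt hFk.le, Real.sq_sqrt hFn.le]
    have hexp2 : Real.exp ((n:ℝ)/2) ^ 2 = Real.exp ((n:ℝ)) := by
      rw [sq, ← Real.exp_add]; ring_nf
    rw [hexp2]
    exact hsq
  have := le_of_sq_le_sq'' (by positivity) (by positivity) goal2
  exact_mod_cast this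
lemma one_le_sqrt_two : (1:ℝ) ≤ Real.sqrt 2 := by
  rw [show (1:ℝ) = Real.sqrt 1 from (Real.sqrt_one).symm]
  exact Real.sqrt_le_sqrt (by norm_num)

lemma hermite_term_bound (n k : ℕ) (hk : k ≤ n) {r : ℝ} (hr : 0 ≤ r) :
    ((((Polynomial.hermite n).coeff k).natAbs : ℕ) : ℝ) * r ^ k ≤
      Real.sqrt (Nat.factorial n) * Real.sqrt 2 ^ n * Real.exp ((n:ℝ) / 2) *
        Real.exp (r ^ 2 / 4) := by
  rcases Nat.even_or_odd (n + k) with he | ho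
  · obtain ⟨c, hc⟩ := he
    obtain ⟨m, hm⟩ : ∃ m, n = 2 * m + k := ⟨(n - k)/2, by omega⟩
    subst hm
    have hco := Polynomial.coeff_hermite_explicit m k
    have hNA : ((Polynomial.hermite (2 * m + k)).coeff k).natAbs =
        Nat.doubleFactorial (2 * m - 1) * Nat.choose (2 * m + k) k := by
      rw [hco]
      simp [Int.natAbs_mul, Int.natAbs_pow]
    rw [hNA]
    have key := key_coeff_bound m k
    have hpk := pow_le_sqrt_fact hr k
    set D : ℝ := ((Nat.doubleFactorial (2 * m - 1) * Nat.choose (2 * m + k) k : ℕ) : ℝ) with hD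
    have hD0 : (0:ℝ) ≤ D := by positivity
    calc D * r ^ k ≤ D * (Real.sqrt 2 ^ k * Real.sqrt (Nat.factorial k) * Real.exp (r ^ 2 / 4)) :=
          mul_le_mul_of_nonneg_left hpk hD0
      _ = (D * Real.sqrt (Nat.factorial k)) * Real.sqrt 2 ^ k * Real.exp (r ^ 2 / 4) := by ring
      _ ≤ (Real.sqrt (Nat.factorial (2 * m + k)) * Real.exp ((2 * m + k : ℕ) / 2)) *
            Real.sqrt 2 ^ (2 * m + k) * Real.exp (r ^ 2 / 4) := by
          have h2 : Real.sqrt 2 ^ k ≤ Real.sqrt 2 ^ (2 * m + k) :=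
            pow_le_pow_right₀ one_le_sqrt_two (by omega)
          have h3 : (0:ℝ) ≤ Real.sqrt 2 ^ k := by positivity
          have h4 : (0:ℝ) ≤ Real.exp (r ^ 2 / 4) := by positivity
          gcongr
      _ = Real.sqrt (Nat.factorial (2 * m + k)) * Real.sqrt 2 ^ (2 * m + k) *
            Real.exp (((2 * m + k : ℕ) : ℝ) / 2) * Real.exp (r ^ 2 / 4) := by
          push_cast; ring
  · rw [Polynomial.coeff_hermite_of_odd_add ho]
    simp only [Int.natAbs_zero, Nat.cast_zero, zero_mul]
    positivity

lemma hermiteH_abs_le (n : ℕ) (z : ℂ) :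
    ‖hermiteH n z‖ ≤
      ((n:ℝ) + 1) * (Real.sqrt (Nat.factorial n) * Real.sqrt 2 ^ n * Real.exp ((n:ℝ) / 2) *
        Real.exp (‖z‖ ^ 2 / 4)) := by
  have hdeg : (Polynomial.hermite n).natDegree = n := Polynomial.natDegree_hermite
  rw [hermiteH, Polynomial.aeval_eq_sum_range, hdeg]
  set B : ℝ := Real.sqrt (Nat.factorial n) * Real.sqrt 2 ^ n * Real.exp ((n:ℝ) / 2) *
      Real.exp (‖z‖ ^ 2 / 4) with hB
  calc ‖∑ i ∈ Finset.range (n + 1), (Polynomial.hermite n).coeff i • z ^ i‖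
      ≤ ∑ i ∈ Finset.range (n + 1), ‖(Polynomial.hermite n).coeff i • z ^ i‖ :=
        norm_sum_le _ _
    _ ≤ ∑ i ∈ Finset.range (n + 1), B := by
        apply Finset.sum_le_sum
        intro i hi
        have hi' : i ≤ n := Nat.lt_succ_iff.mp (Finset.mem_range.mp hi)
        have : ‖(Polynomial.hermite n).coeff i • z ^ i‖ =
            ((((Polynomial.hermite n).coeff i).natAbs : ℕ) : ℝ) * ‖z‖ ^ i := by
          rw [zsmul_eq_mul, norm_mul, norm_pow, Complex.norm_intCast]
          push_cast
          rw [Nat.cast_natAbs, Int.cast_abs]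
        rw [this]
        exact hermite_term_bound n i hi' (norm_nonneg z)
    _ = ((n:ℝ) + 1) * B := by
        rw [Finset.sum_const, Finset.card_range]
        push_cast
        ring

lemma hermitePhi_abs_le (n : ℕ) (w : ℂ) :
    ‖hermitePhi n w‖ ≤
      ((n:ℝ) + 1) * Real.sqrt 2 ^ n * Real.exp ((n:ℝ) / 2) * Real.exp (w.im ^ 2 / 2) := by
  have hfn : (0:ℝ) < Real.sqrt (Nat.factorial n) := by
    apply Real.sqrt_pos.mpr; positivity
  have hc4 : (1:ℝ) ≤ (2 * π) ^ ((1:ℝ)/4) :=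
    Real.one_le_rpow (by nlinarith [Real.pi_gt_three]) (by norm_num)
  have hden : Real.sqrt (Nat.factorial n) ≤ (2 * π) ^ ((1:ℝ)/4) * Real.sqrt (Nat.factorial n) := by
    nlinarith
  have hden0 : (0:ℝ) < (2 * π) ^ ((1:ℝ)/4) * Real.sqrt (Nat.factorial n) := by
    nlinarith
  -- |exp(-(w^2)/4)| = exp((w.im^2 - w.re^2)/4)
  have habsexp : ‖Complex.exp (-(w ^ 2) / 4)‖ =
      Real.exp ((w.im ^ 2 - w.re ^ 2) / 4) := by
    rw [Complex.norm_exp]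
    congr 1
    have : -(w ^ 2) / 4 = (((-(4:ℝ)⁻¹ : ℝ)) : ℂ) * w ^ 2 := by
      push_cast; ring
    rw [this, Complex.mul_re]
    simp [Complex.ofReal_re, Complex.ofReal_im, Complex.mul_re, Complex.mul_im, sq]
    ring
  have habssq : ‖w‖ ^ 2 = w.re ^ 2 + w.im ^ 2 := by
    rw [Complex.sq_norm, Complex.normSq_apply]; ring
  have hP : ‖hermiteP n w‖ ≤
      ((n:ℝ) + 1) * (Real.sqrt 2 ^ n * Real.exp ((n:ℝ) / 2) *
        Real.exp (‖w‖ ^ 2 / 4)) := by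
    rw [hermiteP, norm_div, Complex.norm_real, Real.norm_eq_abs,
      abs_of_pos hden0]
    have hH := hermiteH_abs_le n w
    calc ‖hermiteH n w‖ / ((2 * π) ^ ((1:ℝ)/4) * Real.sqrt (Nat.factorial n))
        ≤ ‖hermiteH n w‖ / Real.sqrt (Nat.factorial n) :=
          div_le_div_of_nonneg_left (norm_nonneg _) hfn hden
      _ ≤ (((n:ℝ) + 1) * (Real.sqrt (Nat.factorial n) * Real.sqrt 2 ^ n *
            Real.exp ((n:ℝ) / 2) * Real.exp (‖w‖ ^ 2 / 4))) /
            Real.sqrt (Nat.factorial n) := by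
          gcongr
      _ = ((n:ℝ) + 1) * (Real.sqrt 2 ^ n * Real.exp ((n:ℝ) / 2) *
            Real.exp (‖w‖ ^ 2 / 4)) := by
          field_simp
  rw [hermitePhi, norm_mul, habsexp]
  calc ‖hermiteP n w‖ * Real.exp ((w.im ^ 2 - w.re ^ 2) / 4)
      ≤ (((n:ℝ) + 1) * (Real.sqrt 2 ^ n * Real.exp ((n:ℝ) / 2) *
          Real.exp (‖w‖ ^ 2 / 4))) * Real.exp ((w.im ^ 2 - w.re ^ 2) / 4) := by
        apply mul_le_mul_of_nonneg_right hP (by positivity)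
    _ = ((n:ℝ) + 1) * Real.sqrt 2 ^ n * Real.exp ((n:ℝ) / 2) *
          (Real.exp (‖w‖ ^ 2 / 4) * Real.exp ((w.im ^ 2 - w.re ^ 2) / 4)) := by ring
    _ = ((n:ℝ) + 1) * Real.sqrt 2 ^ n * Real.exp ((n:ℝ) / 2) * Real.exp (w.im ^ 2 / 2) := by
        congr 1
        rw [← Real.exp_add]
        congr 1
        rw [habssq]
        ring
lemma phi_uniform_bound {N k : ℕ} (hkN : k < N) {w : ℂ} (hw : w.im ^ 2 ≤ (N:ℝ)) :
    ‖hermitePhi k w‖ ≤ (2:ℝ) ^ N * 2 ^ N * Real.exp (N:ℝ) := by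
  have hkN' : (k:ℝ) + 1 ≤ (N:ℝ) := by exact_mod_cast hkN
  have h2N : (N:ℝ) ≤ 2 ^ N := by exact_mod_cast (Nat.lt_two_pow_self (n := N)).le
  have hs2 : Real.sqrt 2 ≤ 2 := by
    have h4 : Real.sqrt 4 = 2 := by
      rw [show (4:ℝ) = 2 ^ 2 by norm_num, Real.sqrt_sq (by norm_num : (0:ℝ) ≤ 2)]
    calc Real.sqrt 2 ≤ Real.sqrt 4 := Real.sqrt_le_sqrt (by norm_num)
      _ = 2 := h4
  have hsqrtpow : Real.sqrt 2 ^ k ≤ (2:ℝ) ^ N := by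
    calc Real.sqrt 2 ^ k ≤ (2:ℝ) ^ k := pow_le_pow_left₀ (Real.sqrt_nonneg 2) hs2 k
      _ ≤ (2:ℝ) ^ N := pow_le_pow_right₀ (by norm_num) hkN.le
  have hexp : Real.exp ((k:ℝ) / 2) * Real.exp (w.im ^ 2 / 2) ≤ Real.exp (N:ℝ) := by
    rw [← Real.exp_add]
    apply Real.exp_le_exp.mpr
    have hk2 : (k:ℝ) ≤ (N:ℝ) := by exact_mod_cast hkN.le
    linarith
  calc ‖hermitePhi k w‖
      ≤ ((k:ℝ) + 1) * Real.sqrt 2 ^ k * Real.exp ((k:ℝ) / 2) * Real.exp (w.im ^ 2 / 2) :=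
        hermitePhi_abs_le k w
    _ = (((k:ℝ) + 1) * Real.sqrt 2 ^ k) * (Real.exp ((k:ℝ) / 2) * Real.exp (w.im ^ 2 / 2)) := by
        ring
    _ ≤ ((2:ℝ) ^ N * 2 ^ N) * Real.exp (N:ℝ) := by
        apply mul_le_mul _ hexp (by positivity) (by positivity)
        apply mul_le_mul (hkN'.trans h2N) hsqrtpow (by positivity) (by positivity)
    _ = (2:ℝ) ^ N * 2 ^ N * Real.exp (N:ℝ) := by ring

theorem kernel_bound_near :
    ∀ α ∈ Set.Ioo (0:ℝ) 1, ∀ A : ℝ, 0 < A →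
      ∃ β : ℝ, 0 < β ∧ β ≤ α/16 ∧ ∃ R₁ : ℝ, 0 < R₁ ∧
        ∀ N : ℕ, 1 ≤ N → ∀ u ∈ Set.Icc (-2 + α) (2 - α),
          ∀ t₁ ∈ Set.Icc (-A) A, ∀ t₂ ∈ Set.Icc (-A) A, ∀ H : ℝ,
            |(((u + t₁ / N : ℝ) : ℂ) * dC H).im| ≤ β →
            |(((u + t₂ / N : ℝ) : ℂ) * dC H).im| ≤ β →
            ‖(N : ℂ)⁻¹ *
                kernelKt N (((u + t₁ / N : ℝ) : ℂ) * dC H)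
                  (((u + t₂ / N : ℝ) : ℂ) * dC H) ((N : ℂ)⁻¹)‖ ≤ R₁ ^ (2 * N) := by
  rintro α ⟨hα0, hα1⟩ A hA
  refine ⟨α/16, by linarith, le_refl _, 32, by norm_num, ?_⟩
  intro N hN u hu t₁ ht₁ t₂ ht₂ H h₁ h₂
  set β : ℝ := α/16 with hβ
  have hβ1 : β ≤ 1 := by rw [hβ]; linarith
  have hβ0 : 0 ≤ β := by rw [hβ]; linarith
  set z₁ : ℂ := ((u + t₁ / N : ℝ) : ℂ) * dC H with hz₁
  set z₂ : ℂ := ((u + t₂ / N : ℝ) : ℂ) * dC H with hz₂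
  have hN0 : (0:ℝ) < N := by exact_mod_cast Nat.lt_of_lt_of_le Nat.zero_lt_one hN
  set sN : ℝ := Real.sqrt N with hsN
  have hsN0 : 0 ≤ sN := Real.sqrt_nonneg _
  have hsNsq : sN ^ 2 = (N:ℝ) := Real.sq_sqrt hN0.le
  -- the cpow computation
  have hpow : ((N:ℂ)⁻¹) ^ (-(1:ℂ)/2) = ((sN : ℝ) : ℂ) := by
    have h1 : ((N:ℂ)⁻¹) = (((N:ℝ)⁻¹ : ℝ) : ℂ) := by push_cast; ring
    have h2 : (-(1:ℂ)/2) = (((-(1/2) : ℝ)) : ℂ) := by push_cast; ring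
    have h3 : ((N:ℝ)⁻¹) ^ ((-(1/2) : ℝ)) = Real.sqrt N := by
      rw [Real.rpow_neg (by positivity), Real.inv_rpow hN0.le, inv_inv, Real.sqrt_eq_rpow]
    rw [h1, h2, ← Complex.ofReal_cpow (by positivity), h3]
  set M : ℝ := (2:ℝ) ^ N * 2 ^ N * Real.exp (N:ℝ) with hM
  have hM0 : 0 ≤ M := by positivity
  -- imaginary parts of scaled points
  have him : ∀ z : ℂ, |z.im| ≤ β → (z * ((sN : ℝ) : ℂ)).im ^ 2 ≤ (N:ℝ) := by
    intro z hz
    have h1 : (z * ((sN : ℝ) : ℂ)).im = z.im * sN := by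
      simp [Complex.mul_im]
    rw [h1]
    have h2 : z.im ^ 2 ≤ β ^ 2 := by
      have := abs_le.mp hz
      nlinarith
    have h3 : z.im ^ 2 ≤ 1 := by nlinarith
    calc (z.im * sN) ^ 2 = z.im ^ 2 * sN ^ 2 := by ring
      _ ≤ 1 * (N:ℝ) := by rw [hsNsq]; apply mul_le_mul_of_nonneg_right h3 hN0.le
      _ = (N:ℝ) := one_mul _
  -- kernel bound
  have hK : ‖kernelK N (z₁ * ((sN : ℝ) : ℂ)) (z₂ * ((sN : ℝ) : ℂ))‖ ≤
      (N:ℝ) * (M * M) := by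
    rw [kernelK]
    calc ‖∑ k ∈ Finset.range N,
          hermitePhi k (z₁ * ((sN : ℝ) : ℂ)) * hermitePhi k (z₂ * ((sN : ℝ) : ℂ))‖
        ≤ ∑ k ∈ Finset.range N, ‖
            (hermitePhi k (z₁ * ((sN : ℝ) : ℂ)) * hermitePhi k (z₂ * ((sN : ℝ) : ℂ)))‖ :=
          norm_sum_le _ _
      _ ≤ ∑ k ∈ Finset.range N, M * M := by
          apply Finset.sum_le_sum
          intro k hk
          have hkN := Finset.mem_range.mp hk
          rw [norm_mul]
          exact mul_le_mul (phi_uniform_bound hkN (him z₁ h₁))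
            (phi_uniform_bound hkN (him z₂ h₂)) (norm_nonneg _) hM0
      _ = (N:ℝ) * (M * M) := by
          rw [Finset.sum_const, Finset.card_range, nsmul_eq_mul]
  -- assemble
  rw [kernelKt, hpow, norm_mul, norm_mul, norm_inv, Complex.norm_natCast, Complex.norm_real, Real.norm_eq_abs,
    abs_of_nonneg hsN0]
  have hsNleN : sN ≤ (N:ℝ) := by
    have hN1 : (1:ℝ) ≤ (N:ℝ) := by exact_mod_cast hN
    have h1 : (N:ℝ) ≤ (N:ℝ) ^ 2 := by nlinarith
    calc sN = Real.sqrt (N:ℝ) := rfl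
      _ ≤ Real.sqrt ((N:ℝ) ^ 2) := Real.sqrt_le_sqrt h1
      _ = (N:ℝ) := Real.sqrt_sq hN0.le
  have h2N : (N:ℝ) ≤ 2 ^ N := by exact_mod_cast (Nat.lt_two_pow_self (n := N)).le
  have hexp3 : Real.exp (N:ℝ) ≤ (3:ℝ) ^ N := by
    have h1 : Real.exp (N:ℝ) = Real.exp 1 ^ N := by
      rw [← Real.exp_nat_mul]; norm_num
    rw [h1]
    apply pow_le_pow_left₀ (Real.exp_pos 1).le
    exact (Real.exp_one_lt_d9.le.trans (by norm_num))
  have hM12 : M ≤ (12:ℝ) ^ N := by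
    calc M = 2 ^ N * 2 ^ N * Real.exp (N:ℝ) := hM
      _ ≤ 2 ^ N * 2 ^ N * 3 ^ N := by
          apply mul_le_mul_of_nonneg_left hexp3 (by positivity)
      _ = (12:ℝ) ^ N := by rw [← mul_pow, ← mul_pow]; norm_num
  calc (N:ℝ)⁻¹ * (sN * ‖kernelK N (z₁ * ((sN : ℝ) : ℂ)) (z₂ * ((sN : ℝ) : ℂ))‖)
      ≤ (N:ℝ)⁻¹ * (sN * ((N:ℝ) * (M * M))) := by
        apply mul_le_mul_of_nonneg_left (mul_le_mul_of_nonneg_left hK hsN0) (by positivity)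
    _ = sN * (M * M) := by field_simp
    _ ≤ (2:ℝ) ^ N * ((12:ℝ) ^ N * (12:ℝ) ^ N) := by
        apply mul_le_mul (hsNleN.trans h2N) _ (by positivity) (by positivity)
        exact mul_le_mul hM12 hM12 hM0 (by positivity)
    _ = (288:ℝ) ^ N := by rw [← mul_pow, ← mul_pow]; norm_num
    _ ≤ (1024:ℝ) ^ N := pow_le_pow_left₀ (by norm_num) (by norm_num) N
    _ = (32:ℝ) ^ (2 * N) := by rw [pow_mul]; norm_num

end
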